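/- Suppose a·m ≠ 0 and set ω := a·m/(2·M·r₊). Then there exists a function C : ℝ → [0, ∞) (depending only on M, a, m) with lim_{λ→+∞} C(λ) = 0 such that: for every real λ and every real μ with μ² > ω², if there exists a nonzero C² solution R of the radial ODE (with parameters ω, m, λ, μ) extending to a C¹ function on [r₊, ∞) and decaying exponentially at infinity, then μ² < ω² + C(λ). -/

import Mathlib

/-!
If `V > 0` on `(r₊, ∞)`, the flux `φ = Re (Δ R' R̄)` satisfies `φ' = (V/Δ)|R|² + Δ|R'|² ≥ 0`
by the radial equation; it tends to `0` at `r₊` (where `Δ = 0` and `R` is `C¹`) and at `∞`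
(exponential decay), so `φ ≡ 0`, hence `φ' ≡ 0` and `R ≡ 0`.

At `ω = a m / (2 M r₊)` the potential factors as
`V = Δ (K + (μ² - ω²) r²) + ω² (r - r₊) (r₊² r + r₊³ - 2 M r²)` with `K = λ + a²ω² - 2 a m ω`.
Since `r / (r - r₋) ≤ r₊ / (r₊ - r₋)` on `[r₊, ∞)`, `V > 0` as soon as
`K + (μ² - ω²) r² ≥ 2 b r` there, for an explicit `b`; once `K > 0` this holds for
`μ² - ω² ≥ b² / K`, a bound that tends to `0` as `λ → ∞`.
-/

open Real Set MeasureTheory Filter Topology ComplexConjugate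

/-- The larger root `r₊ = M + √(M² − a²)`. -/
noncomputable def rPlus (M a : ℝ) : ℝ := M + Real.sqrt (M ^ 2 - a ^ 2)

/-- The smaller root `r₋ = M − √(M² − a²)`. -/
noncomputable def rMinus (M a : ℝ) : ℝ := M - Real.sqrt (M ^ 2 - a ^ 2)

/-- `Δ(r) = (r − r₊)(r − r₋)`. -/
noncomputable def Delta (M a r : ℝ) : ℝ := (r - rPlus M a) * (r - rMinus M a)

/-- The radial potential with real parameters `ω, λ, μ`. -/
noncomputable def Vpot (M a : ℝ) (m : ℤ) (ω lam μ r : ℝ) : ℝ :=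
  -(r ^ 2 + a ^ 2) ^ 2 * ω ^ 2 + 4 * M * a * m * r * ω - a ^ 2 * m ^ 2
    + Delta M a r * (lam + a ^ 2 * ω ^ 2 + μ ^ 2 * r ^ 2)

/-- The radial ODE `Δ (Δ R')' − V R = 0` on `(r₊, ∞)`. -/
def RadialODE (M a : ℝ) (m : ℤ) (ω lam μ : ℝ) (R : ℝ → ℂ) : Prop :=
  ∀ r ∈ Ioi (rPlus M a),
    (Delta M a r : ℂ) * deriv (fun s => (Delta M a s : ℂ) * deriv R s) r
      - (Vpot M a m ω lam μ r : ℂ) * R r = 0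

/-- Exponential decay at infinity of `h` together with its derivative. -/
def ExpDecay (rp : ℝ) (h : ℝ → ℂ) : Prop :=
  ∃ C c : ℝ, 0 < C ∧ 0 < c ∧ ∀ r : ℝ, rp + 1 ≤ r →
    ‖h r‖ + ‖deriv h r‖ ≤ C * Real.exp (-c * r)

noncomputable def energyFlux (D : ℝ → ℝ) (R : ℝ → ℂ) (r : ℝ) : ℝ :=
  ((D r : ℂ) * deriv R r * conj (R r)).re

theorem energyFlux_eq (D : ℝ → ℝ) (R : ℝ → ℂ) (r : ℝ) :
    energyFlux D R r = D r * (deriv R r * conj (R r)).re := by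
  rw [energyFlux, mul_assoc, Complex.re_ofReal_mul]

theorem hasDerivAt_energyFlux {D V : ℝ → ℝ} {R : ℝ → ℂ} {r : ℝ}
    (hF : DifferentiableAt ℝ (fun s => (D s : ℂ) * deriv R s) r)
    (hR : DifferentiableAt ℝ R r) (hDr : D r ≠ 0)
    (hode : (D r : ℂ) * deriv (fun s => (D s : ℂ) * deriv R s) r - (V r : ℂ) * R r = 0) :
    HasDerivAt (energyFlux D R)
      (V r / D r * Complex.normSq (R r) + D r * Complex.normSq (deriv R r)) r := by
  set F : ℝ → ℂ := fun s => (D s : ℂ) * deriv R s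
  have hF' : deriv F r = ((V r / D r : ℝ) : ℂ) * R r := by
    rw [Complex.ofReal_div, div_mul_eq_mul_div, eq_div_iff (by exact_mod_cast hDr)]
    linear_combination hode
  have hconj : HasDerivAt (fun s => conj (R s)) (conj (deriv R r)) r := by
    simpa using hR.hasDerivAt.star
  have hre : HasDerivAt (energyFlux D R)
      ((deriv F r * conj (R r) + F r * conj (deriv R r)).re) r :=
    Complex.reCLM.hasFDerivAt.comp_hasDerivAt r (hF.hasDerivAt.mul hconj)
  convert hre using 1
  rw [hF', mul_assoc, mul_assoc, Complex.add_re, Complex.re_ofReal_mul, Complex.re_ofReal_mul,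
    Complex.mul_conj, Complex.mul_conj, Complex.ofReal_re, Complex.ofReal_re]

theorem tendsto_energyFlux_nhdsGT {D : ℝ → ℝ} {R : ℝ → ℂ} {p : ℝ}
    (hD : Tendsto D (𝓝[>] p) (𝓝 0)) (hR : ContDiffOn ℝ 1 R (Ici p)) :
    Tendsto (energyFlux D R) (𝓝[>] p) (𝓝 0) := by
  set g : ℝ → ℝ := fun r => (derivWithin R (Ici p) r * conj (R r)).re
  have hg : ContinuousOn g (Ici p) :=
    Complex.continuous_re.comp_continuousOn <|
      (hR.continuousOn_derivWithin (uniqueDiffOn_Ici p) le_rfl).mul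
        (Complex.continuous_conj.comp_continuousOn hR.continuousOn)
  have hlim : Tendsto (fun r => D r * g r) (𝓝[>] p) (𝓝 0) := by
    simpa using
      hD.mul ((hg p self_mem_Ici).tendsto.mono_left (nhdsWithin_mono p Ioi_subset_Ici_self))
  refine hlim.congr' ?_
  filter_upwards [self_mem_nhdsWithin] with r (hr : p < r)
  simp only [g, energyFlux_eq, derivWithin_of_mem_nhds (Ici_mem_nhds hr)]

theorem tendsto_energyFlux_atTop {D : ℝ → ℝ} {n : ℕ} (hD : D =O[atTop] fun r => r ^ n)
    {rp : ℝ} {R : ℝ → ℂ} (hR : ExpDecay rp R) :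
    Tendsto (energyFlux D R) atTop (𝓝 0) := by
  obtain ⟨C, c, -, hc, hdecay⟩ := hR
  have hRR : (fun r => (deriv R r * conj (R r)).re) =O[atTop] fun r => (exp (2 * c * r))⁻¹ := by
    refine Asymptotics.IsBigO.of_bound (C ^ 2) ?_
    filter_upwards [eventually_ge_atTop (rp + 1)] with r hr
    have hsum := hdecay r hr
    have hexp : (exp (2 * c * r))⁻¹ = exp (-c * r) ^ 2 := by
      rw [← exp_neg, ← exp_nat_mul]; ring_nf
    rw [Real.norm_of_nonneg (inv_nonneg.2 (exp_pos _).le), hexp]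
    calc ‖(deriv R r * conj (R r)).re‖ ≤ ‖deriv R r‖ * ‖R r‖ := by
          simpa using Complex.abs_re_le_norm (deriv R r * conj (R r))
      _ ≤ (‖R r‖ + ‖deriv R r‖) ^ 2 := by nlinarith [norm_nonneg (R r), norm_nonneg (deriv R r)]
      _ ≤ (C * exp (-c * r)) ^ 2 := pow_le_pow_left₀ (by positivity) hsum 2
      _ = C ^ 2 * exp (-c * r) ^ 2 := by ring
  have htail :=
    (isLittleO_pow_exp_pos_mul_atTop n (by positivity : 0 < 2 * c)).tendsto_div_nhds_zero
  refine ((hD.mul hRR).trans_tendsto ?_).congr (fun r => (energyFlux_eq D R r).symm)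
  simpa only [div_eq_mul_inv] using htail

theorem eqOn_zero_of_monotoneOn_Ioi {φ : ℝ → ℝ} {p : ℝ} (hφ : MonotoneOn φ (Ioi p))
    (hp : Tendsto φ (𝓝[>] p) (𝓝 0)) (hinf : Tendsto φ atTop (𝓝 0)) : EqOn φ 0 (Ioi p) := by
  intro x hx
  apply le_antisymm
  · refine ge_of_tendsto hinf ?_
    filter_upwards [eventually_ge_atTop x] with y hy
    exact hφ hx (lt_of_lt_of_le hx hy) hy
  · refine le_of_tendsto hp ?_
    filter_upwards [Ioc_mem_nhdsGT_of_mem ⟨le_refl p, hx⟩] with y hy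
    exact hφ hy.1 hx hy.2

/-- A value of `ε` beyond which `2 b r ≤ K + ε r²` for all `r ≥ p`; for `K > 0` it is the
discriminant bound `b² / K`. -/
noncomputable def quadThreshold (b p K : ℝ) : ℝ :=
  if 0 < K then b ^ 2 / K else (2 * b * p - K) / p ^ 2

theorem quadThreshold_nonneg {b p : ℝ} (hb : 0 ≤ b) (hp : 0 < p) (K : ℝ) :
    0 ≤ quadThreshold b p K := by
  unfold quadThreshold
  split_ifs with hK
  · positivity
  · exact div_nonneg (by nlinarith) (sq_nonneg p)

theorem tendsto_quadThreshold_atTop (b p : ℝ) : Tendsto (quadThreshold b p) atTop (𝓝 0) := by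
  refine ((tendsto_const_nhds (x := b ^ 2)).div_atTop tendsto_id).congr' ?_
  filter_upwards [eventually_gt_atTop 0] with K hK
  simp [quadThreshold, hK]

theorem two_mul_le_add_mul_sq_of_quadThreshold_le {b p K ε : ℝ} (hb : 0 ≤ b) (hp : 0 < p)
    (hε : quadThreshold b p K ≤ ε) {r : ℝ} (hr : p ≤ r) : 2 * b * r ≤ K + ε * r ^ 2 := by
  have hε0 : 0 ≤ ε := (quadThreshold_nonneg hb hp K).trans hε
  unfold quadThreshold at hε
  split_ifs at hε with hK
  · have hdisc : b ^ 2 ≤ ε * K := (div_le_iff₀ hK).1 hε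
    have : 0 ≤ K * (K + ε * r ^ 2 - 2 * b * r) := by
      nlinarith [sq_nonneg (K - b * r), mul_le_mul_of_nonneg_right hdisc (sq_nonneg r)]
    linarith [(mul_nonneg_iff_of_pos_left hK).1 this]
  · have hcoef : 2 * b * p - K ≤ ε * p ^ 2 := (div_le_iff₀ (by positivity)).1 hε
    have : 0 ≤ p * (K + ε * r ^ 2 - 2 * b * r) := by
      nlinarith [mul_le_mul_of_nonneg_right hcoef (hp.le.trans hr),
        mul_nonneg_of_nonpos_of_nonpos (not_lt.1 hK) (sub_nonpos.2 hr),
        mul_nonneg (mul_nonneg hε0 hp.le) (mul_nonneg (hp.le.trans hr) (sub_nonneg.2 hr))]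
    linarith [(mul_nonneg_iff_of_pos_left hp).1 this]

theorem rMinus_le_rPlus (M a : ℝ) : rMinus M a ≤ rPlus M a := by
  have := Real.sqrt_nonneg (M ^ 2 - a ^ 2)
  rw [rMinus, rPlus]; linarith

theorem Delta_pos {M a r : ℝ} (hr : rPlus M a < r) : 0 < Delta M a r :=
  mul_pos (sub_pos.2 hr) (sub_pos.2 ((rMinus_le_rPlus M a).trans_lt hr))

theorem hasDerivAt_Delta (M a r : ℝ) :
    HasDerivAt (Delta M a) (2 * r - rPlus M a - rMinus M a) r :=
  (((hasDerivAt_id' r).sub_const _).mul ((hasDerivAt_id' r).sub_const _)).congr_deriv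
    (by ring)

theorem tendsto_Delta_nhdsGT (M a : ℝ) : Tendsto (Delta M a) (𝓝[>] rPlus M a) (𝓝 0) := by
  have h := (hasDerivAt_Delta M a (rPlus M a)).continuousAt.tendsto
  rw [Delta, sub_self, zero_mul] at h
  exact h.mono_left nhdsWithin_le_nhds

theorem Delta_isBigO (M a : ℝ) : Delta M a =O[atTop] fun r => r ^ 2 := by
  have hlin : ∀ c : ℝ, (fun r : ℝ => r - c) =O[atTop] id := fun c =>
    (Asymptotics.isBigO_refl _ _).sub (Asymptotics.isLittleO_const_id_atTop c).isBigO
  exact ((hlin _).mul (hlin _)).congr_right fun r => (sq r).symm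

theorem RadialODE.eqOn_zero_of_Vpot_pos {M a : ℝ} {m : ℤ} {ω lam μ : ℝ} {R : ℝ → ℂ}
    (hode : RadialODE M a m ω lam μ R) (hV : ∀ r ∈ Ioi (rPlus M a), 0 < Vpot M a m ω lam μ r)
    (h2 : ContDiffOn ℝ 2 R (Ioi (rPlus M a))) (h1 : ContDiffOn ℝ 1 R (Ici (rPlus M a)))
    (hdec : ExpDecay (rPlus M a) R) : EqOn R 0 (Ioi (rPlus M a)) := by
  set p := rPlus M a
  set ψ : ℝ → ℝ := fun r => Vpot M a m ω lam μ r / Delta M a r * Complex.normSq (R r)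
    + Delta M a r * Complex.normSq (deriv R r)
  have hR' : DifferentiableOn ℝ (deriv R) (Ioi p) :=
    (h2.deriv_of_isOpen isOpen_Ioi (m := 1) (by norm_num)).differentiableOn one_ne_zero
  have hflux : ∀ r ∈ Ioi p, HasDerivAt (energyFlux (Delta M a) R) (ψ r) r := fun r hr =>
    hasDerivAt_energyFlux
      ((hasDerivAt_Delta M a r).ofReal_comp.differentiableAt.mul
        (hR'.differentiableAt (isOpen_Ioi.mem_nhds hr)))
      ((h2.differentiableOn (by norm_num)).differentiableAt (isOpen_Ioi.mem_nhds hr))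
      (Delta_pos hr).ne' (hode r hr)
  have hψ : ∀ r ∈ Ioi p, 0 ≤ ψ r := fun r hr =>
    add_nonneg (mul_nonneg (div_pos (hV r hr) (Delta_pos hr)).le (Complex.normSq_nonneg _))
      (mul_nonneg (Delta_pos hr).le (Complex.normSq_nonneg _))
  have hmono : MonotoneOn (energyFlux (Delta M a) R) (Ioi p) := by
    refine monotoneOn_of_hasDerivWithinAt_nonneg (f' := ψ) (convex_Ioi p)
      (fun r hr => (hflux r hr).continuousAt.continuousWithinAt) ?_ ?_ <;> rw [interior_Ioi]
    exacts [fun r hr => (hflux r hr).hasDerivWithinAt, hψ]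
  have hzero := eqOn_zero_of_monotoneOn_Ioi hmono
    (tendsto_energyFlux_nhdsGT (tendsto_Delta_nhdsGT M a) h1)
    (tendsto_energyFlux_atTop (Delta_isBigO M a) hdec)
  intro r hr
  have hψr : ψ r = 0 := by
    refine (hflux r hr).unique ((hasDerivAt_const r (0 : ℝ)).congr_of_eventuallyEq ?_)
    filter_upwards [isOpen_Ioi.mem_nhds hr] with s hs using hzero hs
  have hRr : Complex.normSq (R r) = 0 := by
    have hVΔ := div_pos (hV r hr) (Delta_pos hr)
    have := mul_nonneg (Delta_pos hr).le (Complex.normSq_nonneg (deriv R r))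
    have := Complex.normSq_nonneg (R r)
    nlinarith
  simpa using hRr

theorem rPlus_add_rMinus (M a : ℝ) : rPlus M a + rMinus M a = 2 * M := by
  rw [rPlus, rMinus]; ring

theorem rPlus_mul_rMinus {M a : ℝ} (ha : |a| ≤ M) : rPlus M a * rMinus M a = a ^ 2 := by
  have h : Real.sqrt (M ^ 2 - a ^ 2) ^ 2 = M ^ 2 - a ^ 2 :=
    Real.sq_sqrt (by nlinarith [sq_abs a, abs_nonneg a])
  rw [rPlus, rMinus]; linear_combination -h

theorem rMinus_nonneg {M a : ℝ} (ha : |a| ≤ M) : 0 ≤ rMinus M a := by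
  have h : Real.sqrt (M ^ 2 - a ^ 2) ≤ M :=
    Real.sqrt_le_iff.2 ⟨(abs_nonneg a).trans ha, by nlinarith [sq_nonneg a]⟩
  rw [rMinus]; linarith

theorem rMinus_lt_rPlus {M a : ℝ} (ha : |a| < M) : rMinus M a < rPlus M a := by
  have : 0 < Real.sqrt (M ^ 2 - a ^ 2) :=
    Real.sqrt_pos.2 (by nlinarith [sq_abs a, abs_nonneg a])
  rw [rMinus, rPlus]; linarith

theorem rPlus_pos {M a : ℝ} (ha : |a| < M) : 0 < rPlus M a :=
  lt_of_le_of_lt (rMinus_nonneg ha.le) (rMinus_lt_rPlus ha)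

/-- At the superradiant frequency `ω (r₊² + a²) = a m` the potential vanishes to first order
at the horizon. -/
theorem Vpot_eq_of_superradiant {M a : ℝ} (ha : |a| ≤ M) {m : ℤ} {ω : ℝ}
    (hω : 2 * M * rPlus M a * ω = a * m) (lam μ r : ℝ) :
    Vpot M a m ω lam μ r =
      Delta M a r * (lam + a ^ 2 * ω ^ 2 - 2 * (a * m) * ω + (μ ^ 2 - ω ^ 2) * r ^ 2)
        + ω ^ 2 * (r - rPlus M a) * (rPlus M a ^ 2 * r + rPlus M a ^ 3 - 2 * M * r ^ 2) := by
  have hq : rMinus M a = 2 * M - rPlus M a := by linarith [rPlus_add_rMinus M a]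
  have ha2 : a ^ 2 = rPlus M a * (2 * M - rPlus M a) := by rw [← hq, rPlus_mul_rMinus ha]
  have hV : Vpot M a m ω lam μ r = -(r ^ 2 + a ^ 2) ^ 2 * ω ^ 2 + 4 * M * r * ω * (a * m)
      - (a * m) ^ 2 + Delta M a r * (lam + a ^ 2 * ω ^ 2 + μ ^ 2 * r ^ 2) := by
    rw [Vpot]; ring
  rw [hV, ← hω, ha2, Delta, hq]
  ring

theorem Vpot_pos_of_superradiant {M a : ℝ} (ha : |a| < M) {m : ℤ} {ω lam μ : ℝ}
    (hω : 2 * M * rPlus M a * ω = a * m) (hω0 : ω ≠ 0)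
    (hquad : ∀ r, rPlus M a ≤ r → 2 * (M * ω ^ 2 * rPlus M a / (rPlus M a - rMinus M a)) * r ≤
      lam + a ^ 2 * ω ^ 2 - 2 * (a * m) * ω + (μ ^ 2 - ω ^ 2) * r ^ 2)
    {r : ℝ} (hr : rPlus M a < r) : 0 < Vpot M a m ω lam μ r := by
  rw [Vpot_eq_of_superradiant ha.le hω]
  set p := rPlus M a
  set q := rMinus M a
  have hq : 0 ≤ q := rMinus_nonneg ha.le
  have hpq : 0 < p - q := sub_pos.2 (rMinus_lt_rPlus ha)
  have hp : 0 < p := rPlus_pos ha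
  have hMω : 0 ≤ M * ω ^ 2 := mul_nonneg ((abs_nonneg a).trans ha.le) (sq_nonneg ω)
  -- `r / (r - q)` decreases in `r`, so it is at most `p / (p - q)` on `[p, ∞)`.
  have hslope : M * ω ^ 2 * r ≤ M * ω ^ 2 * p / (p - q) * (r - q) := by
    rw [div_mul_eq_mul_div, le_div_iff₀ hpq]
    nlinarith [mul_nonneg (mul_nonneg hMω hq) (sub_nonneg.2 hr.le)]
  have hbound : (r - p) * (2 * M * ω ^ 2 * r ^ 2) ≤ Delta M a r *
      (lam + a ^ 2 * ω ^ 2 - 2 * (a * m) * ω + (μ ^ 2 - ω ^ 2) * r ^ 2) :=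
    calc (r - p) * (2 * M * ω ^ 2 * r ^ 2)
        ≤ (r - p) * ((r - q) * (2 * (M * ω ^ 2 * p / (p - q)) * r)) := by
          refine mul_le_mul_of_nonneg_left ?_ (sub_nonneg.2 hr.le)
          nlinarith [mul_le_mul_of_nonneg_left hslope (hp.trans hr).le]
      _ = Delta M a r * (2 * (M * ω ^ 2 * p / (p - q)) * r) := by rw [Delta]; ring
      _ ≤ _ := mul_le_mul_of_nonneg_left (hquad r hr.le) (Delta_pos hr).le
  have hhorizon : 0 < ω ^ 2 * (r - p) * (p ^ 2 * r + p ^ 3) := by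
    have := sub_pos.2 hr
    have := hp.trans hr
    positivity
  linarith

theorem stmt3_general (M a : ℝ) (ha : |a| < M) (m : ℤ)
    (ham : a * m ≠ 0) :
    ∃ C : ℝ → ℝ, (∀ lam : ℝ, 0 ≤ C lam) ∧ Tendsto C atTop (𝓝 0) ∧
      ∀ lam μ : ℝ, (a * m / (2 * M * rPlus M a)) ^ 2 < μ ^ 2 →
        (∃ R : ℝ → ℂ,
          (∃ r ∈ Ioi (rPlus M a), R r ≠ 0) ∧
          ContDiffOn ℝ 2 R (Ioi (rPlus M a)) ∧
          RadialODE M a m (a * m / (2 * M * rPlus M a)) lam μ R ∧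
          ContDiffOn ℝ 1 R (Ici (rPlus M a)) ∧
          ExpDecay (rPlus M a) R) →
        μ ^ 2 < (a * m / (2 * M * rPlus M a)) ^ 2 + C lam := by
  set p := rPlus M a
  set ω := a * m / (2 * M * p)
  have hp : 0 < p := rPlus_pos ha
  have hM : 0 < M := (abs_nonneg a).trans_lt ha
  have hω : 2 * M * p * ω = a * m := mul_div_cancel₀ _ (by positivity)
  have hω0 : ω ≠ 0 := div_ne_zero ham (by positivity)
  set b := M * ω ^ 2 * p / (p - rMinus M a)
  have hb : 0 ≤ b := div_nonneg (by positivity) (sub_pos.2 (rMinus_lt_rPlus ha)).le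
  set κ := a ^ 2 * ω ^ 2 - 2 * (a * m) * ω
  refine ⟨fun lam => quadThreshold b p (lam + κ), fun lam => quadThreshold_nonneg hb hp _,
    (tendsto_quadThreshold_atTop b p).comp (tendsto_atTop_add_const_right _ κ tendsto_id), ?_⟩
  rintro lam μ - ⟨R, ⟨r₀, hr₀, hR₀⟩, h2, hode, h1, hdec⟩
  by_contra! hμ
  have hV : ∀ r ∈ Ioi p, 0 < Vpot M a m ω lam μ r := fun r hr =>
    Vpot_pos_of_superradiant ha hω hω0 (fun s hs => by
      have := two_mul_le_add_mul_sq_of_quadThreshold_le hb hp (ε := μ ^ 2 - ω ^ 2)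
        (by linarith) hs
      linarith) hr
  exact hR₀ (hode.eqOn_zero_of_Vpot_pos hV h2 h1 hdec hr₀)

/-- with `ω = a m / (2 M r₊)`, there is a function `C(λ) ≥ 0` tending to `0` as
`λ → ∞` such that any real mode solution with mass `μ` satisfies `μ² < ω² + C(λ)`. -/
theorem stmt3 (M a : ℝ) (hM : 0 < M) (ha : |a| < M) (m : ℤ)
    (ham : a * m ≠ 0) :
    ∃ C : ℝ → ℝ, (∀ lam : ℝ, 0 ≤ C lam) ∧ Tendsto C atTop (𝓝 0) ∧
      ∀ lam μ : ℝ, (a * m / (2 * M * rPlus M a)) ^ 2 < μ ^ 2 →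
        (∃ R : ℝ → ℂ,
          (∃ r ∈ Ioi (rPlus M a), R r ≠ 0) ∧
          ContDiffOn ℝ 2 R (Ioi (rPlus M a)) ∧
          RadialODE M a m (a * m / (2 * M * rPlus M a)) lam μ R ∧
          ContDiffOn ℝ 1 R (Ici (rPlus M a)) ∧
          ExpDecay (rPlus M a) R) →
        μ ^ 2 < (a * m / (2 * M * rPlus M a)) ^ 2 + C lam :=
  stmt3_general M a ha m ham
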